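/- arXiv:2009.07916 — 3 statements merged into one kernel-verified Lean document; each statement's English description precedes it below -/
import Mathlib

section
/- Let p̂, p ∈ ℝ^n be probability vectors with ‖p − p̂‖₁ ≤ 2ε, and let μ, u ∈ ℝ^n satisfy μᵢ ≤ uᵢ with pᵢ ≥ 0 for all i. Then pᵀ μ ≤ p̂ᵀ u + ε·(maxᵢ uᵢ − minᵢ uᵢ). -/
/-- If `p̂, p` are probability vectors with `‖p − p̂‖₁ ≤ 2ε` and `μᵢ ≤ uᵢ` componentwise, then
`pᵀμ ≤ p̂ᵀu + ε·(maxᵢ uᵢ − minᵢ uᵢ)`. -/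
theorem stmt7 {n : ℕ} (hn : 0 < n) (phat p μ u : Fin n → ℝ) (ε : ℝ) (hε : 0 ≤ ε)
    (hphat_nonneg : ∀ i, 0 ≤ phat i) (hp_nonneg : ∀ i, 0 ≤ p i)
    (hphat_sum : ∑ i, phat i = 1) (hp_sum : ∑ i, p i = 1)
    (h1 : ∑ i, |p i - phat i| ≤ 2 * ε)
    (hμu : ∀ i, μ i ≤ u i) :
    ∑ i, p i * μ i ≤ ∑ i, phat i * u i + ε * ((⨆ i, u i) - ⨅ i, u i) := by
  have hne : Nonempty (Fin n) := Fin.pos_iff_nonempty.mp hn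
  set M := ⨆ i, u i with hMdef
  set m := ⨅ i, u i with hmdef
  have hM : ∀ i, u i ≤ M := fun i =>
    le_ciSup (Set.Finite.bddAbove (Set.finite_range u)) i
  have hm : ∀ i, m ≤ u i := fun i =>
    ciInf_le (Set.Finite.bddBelow (Set.finite_range u)) i
  have hMm : 0 ≤ M - m := by
    obtain ⟨i⟩ := hne
    linarith [hM i, hm i]
  have step1 : ∑ i, p i * μ i ≤ ∑ i, p i * u i :=
    Finset.sum_le_sum fun i _ => mul_le_mul_of_nonneg_left (hμu i) (hp_nonneg i)
  have hzero : ∑ i, (p i - phat i) = 0 := by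
    rw [Finset.sum_sub_distrib, hp_sum, hphat_sum]; ring
  have hrepr : ∑ i, p i * u i - ∑ i, phat i * u i
      = ∑ i, (p i - phat i) * (u i - (M + m) / 2) := by
    have : ∑ i, (p i - phat i) * (u i - (M + m) / 2)
        = ∑ i, ((p i * u i - phat i * u i) - (M + m) / 2 * (p i - phat i)) := by
      apply Finset.sum_congr rfl; intro i _; ring
    rw [this, Finset.sum_sub_distrib, Finset.sum_sub_distrib, ← Finset.mul_sum, hzero]
    ring
  have hbound : ∀ i, (p i - phat i) * (u i - (M + m) / 2)
      ≤ |p i - phat i| * ((M - m) / 2) := by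
    intro i
    calc (p i - phat i) * (u i - (M + m) / 2)
        ≤ |(p i - phat i) * (u i - (M + m) / 2)| := le_abs_self _
      _ = |p i - phat i| * |u i - (M + m) / 2| := abs_mul _ _
      _ ≤ |p i - phat i| * ((M - m) / 2) := by
          apply mul_le_mul_of_nonneg_left _ (abs_nonneg _)
          rw [abs_le]
          constructor <;> [linarith [hm i]; linarith [hM i]]
  have key : ∑ i, p i * u i - ∑ i, phat i * u i ≤ ε * (M - m) := by
    rw [hrepr]
    calc ∑ i, (p i - phat i) * (u i - (M + m) / 2)
        ≤ ∑ i, |p i - phat i| * ((M - m) / 2) :=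
          Finset.sum_le_sum fun i _ => hbound i
      _ = (∑ i, |p i - phat i|) * ((M - m) / 2) := by rw [Finset.sum_mul]
      _ ≤ (2 * ε) * ((M - m) / 2) := by
          apply mul_le_mul_of_nonneg_right h1 (by linarith)
      _ = ε * (M - m) := by ring
  linarith
end

section
/- Let X̄ₙ be the mean of n i.i.d. Bernoulli(μ) random variables. Then for any δ ∈ (0,1), P(μ ≥ X̄ₙ + √(log(1/δ)/(2n))) ≤ δ. -/
open MeasureTheory ProbabilityTheory

/-- The Bernoulli(p) distribution on ℝ: mass `p` at `1` and `1−p` at `0`. -/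
noncomputable def bernoulliReal (p : ℝ) : Measure ℝ :=
  ENNReal.ofReal p • Measure.dirac 1 + ENNReal.ofReal (1 - p) • Measure.dirac 0

/-!
A Bernoulli variable takes values in `[0, 1]`, so by Hoeffding's lemma `μ - Xᵢ` is sub-Gaussian
with variance proxy `1/4`. The sum of the `n` independent centred variables is then
sub-Gaussian with proxy `n/4`, and the Chernoff bound gives `P(μ ≥ X̄ₙ + ε) ≤ exp (-2 n ε²)`,
which is at most `δ` for `ε = √(log (1/δ) / (2n))`.
-/

open scoped ENNReal
open Real Finset

lemma ae_mem_Icc_bernoulliReal (p : ℝ) :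
    ∀ᵐ x ∂bernoulliReal p, x ∈ Set.Icc (0 : ℝ) 1 := by
  rw [bernoulliReal, ae_add_measure_iff]
  constructor <;>
  · refine Measure.ae_smul_measure ?_ _
    simp

lemma integral_id_bernoulliReal {p : ℝ} (hp : 0 ≤ p) : ∫ x, x ∂bernoulliReal p = p := by
  have hint (a : ℝ) (c : ℝ≥0∞) (hc : c ≠ ∞) :
      Integrable (fun x : ℝ ↦ x) (c • Measure.dirac a) :=
    (integrable_dirac (by simp)).smul_measure hc
  rw [bernoulliReal, integral_add_measure (hint _ _ ENNReal.ofReal_ne_top)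
    (hint _ _ ENNReal.ofReal_ne_top)]
  simp [ENNReal.toReal_ofReal hp]

section SubGaussian

variable {Ω : Type*} [MeasurableSpace Ω] {P : Measure Ω} [IsProbabilityMeasure P]

lemma hasSubgaussianMGF_sub_of_map_eq_bernoulliReal {X : Ω → ℝ} (hX : Measurable X) {p : ℝ}
    (hp : 0 ≤ p) (hdist : P.map X = bernoulliReal p) :
    HasSubgaussianMGF (fun ω ↦ p - X ω) 4⁻¹ P := by
  have hIcc : ∀ᵐ ω ∂P, X ω ∈ Set.Icc (0 : ℝ) 1 :=
    ae_of_ae_map hX.aemeasurable (hdist ▸ ae_mem_Icc_bernoulliReal p)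
  have hmean : P[X] = p := by
    rw [← integral_id_bernoulliReal hp, ← hdist]
    exact (integral_map hX.aemeasurable aestronglyMeasurable_id).symm
  convert (hasSubgaussianMGF_of_mem_Icc hX.aemeasurable hIcc).neg using 1
  · ext ω
    simp [hmean]
  · norm_num

lemma measureReal_mean_add_le_le_of_map_eq_bernoulliReal {ι : Type*} [Fintype ι] [Nonempty ι]
    {X : ι → Ω → ℝ} (hX : ∀ i, Measurable (X i)) (hindep : iIndepFun X P) {p : ℝ}
    (hp : 0 ≤ p) (hdist : ∀ i, P.map (X i) = bernoulliReal p) {t : ℝ} (ht : 0 ≤ t) :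
    P.real {ω | (Fintype.card ι : ℝ)⁻¹ * ∑ i, X i ω + t ≤ p}
      ≤ exp (-2 * Fintype.card ι * t ^ 2) := by
  set m : ℝ := (Fintype.card ι : ℝ) with hm_def
  have hm : 0 < m := by positivity
  have hindep' : iIndepFun (fun i ω ↦ p - X i ω) P :=
    hindep.comp (fun _ x ↦ p - x) fun _ ↦ by fun_prop
  have hsum := HasSubgaussianMGF.measure_sum_ge_le_of_iIndepFun hindep' (s := univ)
    (fun i _ ↦ hasSubgaussianMGF_sub_of_map_eq_bernoulliReal (hX i) hp (hdist i))
    (mul_nonneg hm.le ht)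
  have hevent : {ω | m⁻¹ * ∑ i, X i ω + t ≤ p} = {ω | m * t ≤ ∑ i, (p - X i ω)} := by
    ext ω
    simp only [Set.mem_ofPred_eq, sum_sub_distrib, sum_const, card_univ, nsmul_eq_mul, ← hm_def]
    rw [← le_sub_iff_add_le, inv_mul_le_iff₀ hm, mul_sub]
    constructor <;> intro h <;> linarith
  rw [hevent]
  convert hsum using 2
  push_cast
  simp only [sum_const, card_univ, nsmul_eq_mul]
  field_simp
  ring

end SubGaussian

theorem stmt14_general {Ω : Type*} [MeasurableSpace Ω] (P : Measure Ω) [IsProbabilityMeasure P]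
    (n : ℕ) (hn : 1 ≤ n) (μ₀ : ℝ) (hμ0 : 0 ≤ μ₀)
    (X : Fin n → Ω → ℝ) (hmeas : ∀ i, Measurable (X i))
    (hdist : ∀ i, P.map (X i) = bernoulliReal μ₀)
    (hindep : iIndepFun X P)
    (δ : ℝ) (hδ0 : 0 < δ) :
    P {ω | μ₀ ≥ (1 / (n : ℝ)) * ∑ i, X i ω + Real.sqrt (Real.log (1 / δ) / (2 * n))}
      ≤ ENNReal.ofReal δ := by
  have : Nonempty (Fin n) := ⟨⟨0, hn⟩⟩
  have hmean := measureReal_mean_add_le_le_of_map_eq_bernoulliReal hmeas hindep hμ0 hdist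
    (sqrt_nonneg (log (1 / δ) / (2 * n)))
  rw [Fintype.card_fin] at hmean
  have hexp : exp (-2 * n * √(log (1 / δ) / (2 * n)) ^ 2) ≤ δ := calc
    _ ≤ exp (-2 * n * (log (1 / δ) / (2 * n))) :=
      exp_le_exp.2 <| mul_le_mul_of_nonpos_left (le_max_left _ _ |>.trans_eq sq_sqrt'.symm)
        (by linarith [n.cast_nonneg (α := ℝ)])
    _ = δ := by
      field_simp
      rw [one_div, log_inv, neg_neg, exp_log hδ0]
  rw [← ofReal_measureReal]
  refine ENNReal.ofReal_le_ofReal ?_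
  simpa only [one_div, ge_iff_le] using hmean.trans hexp

/-- Hoeffding bound for Bernoulli means: if `X̄ₙ` is the mean of `n` i.i.d. Bernoulli(μ)
variables, then `P(μ ≥ X̄ₙ + √(log(1/δ)/(2n))) ≤ δ` for any `δ ∈ (0,1)`. -/
theorem stmt14 {Ω : Type*} [MeasurableSpace Ω] (P : Measure Ω) [IsProbabilityMeasure P]
    (n : ℕ) (hn : 1 ≤ n) (μ₀ : ℝ) (hμ0 : 0 ≤ μ₀) (hμ1 : μ₀ ≤ 1)
    (X : Fin n → Ω → ℝ) (hmeas : ∀ i, Measurable (X i))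
    (hdist : ∀ i, P.map (X i) = bernoulliReal μ₀)
    (hindep : iIndepFun X P)
    (δ : ℝ) (hδ0 : 0 < δ) (hδ1 : δ < 1) :
    P {ω | μ₀ ≥ (1 / (n : ℝ)) * ∑ i, X i ω + Real.sqrt (Real.log (1 / δ) / (2 * n))}
      ≤ ENNReal.ofReal δ :=
  stmt14_general P n hn μ₀ hμ0 X hmeas hdist hindep δ hδ0
end

section
/- For the maximization problem sup over probability vectors p* ∈ ℝ^{D(S)} (nonnegative, summing to 1) with ‖p* − p̂‖₁ ≤ 2ε of the linear functional p*ᵀ u: the supremum is at most p̂ᵀ u + ε·(max_s u(s) − min_s u(s)), where p̂ is itself a probability vector. -/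
/-- The supremum of `p*ᵀ u` over probability vectors `p*` with `‖p* − p̂‖₁ ≤ 2ε` is at most
`p̂ᵀ u + ε·(maxₛ u(s) − minₛ u(s))`. -/
theorem stmt16 {D : Type*} [Fintype D] [Nonempty D]
    (phat : D → ℝ) (hphat_nonneg : ∀ s, 0 ≤ phat s) (hphat_sum : ∑ s, phat s = 1)
    (ε : ℝ) (hε : 0 ≤ ε) (u : D → ℝ) :
    ∀ pstar : D → ℝ, (∀ s, 0 ≤ pstar s) → (∑ s, pstar s = 1) →
      (∑ s, |pstar s - phat s|) ≤ 2 * ε →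
      ∑ s, pstar s * u s ≤ ∑ s, phat s * u s + ε * ((⨆ s, u s) - ⨅ s, u s) := by
  intro pstar hp1 hp2 hp3
  set M := ⨆ s, u s with hMdef
  set m := ⨅ s, u s with hmdef
  have hM : ∀ s, u s ≤ M := fun s => le_ciSup (Finite.bddAbove_range u) s
  have hm : ∀ s, m ≤ u s := fun s => ciInf_le (Finite.bddBelow_range u) s
  set c : ℝ := (M + m) / 2 with hc
  have key : ∑ s, pstar s * u s - ∑ s, phat s * u s
      = ∑ s, (pstar s - phat s) * (u s - c) := by
    have h1 : ∑ s, (pstar s - phat s) * (u s - c)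
        = ∑ s, (pstar s * u s - phat s * u s - c * (pstar s - phat s)) :=
      Finset.sum_congr rfl fun s _ => by ring
    rw [h1, Finset.sum_sub_distrib, Finset.sum_sub_distrib, ← Finset.mul_sum,
      Finset.sum_sub_distrib, hp2, hphat_sum]
    ring
  have habs : ∀ s, (pstar s - phat s) * (u s - c) ≤ |pstar s - phat s| * ((M - m) / 2) := by
    intro s
    calc (pstar s - phat s) * (u s - c) ≤ |(pstar s - phat s) * (u s - c)| := le_abs_self _
      _ = |pstar s - phat s| * |u s - c| := abs_mul _ _
      _ ≤ |pstar s - phat s| * ((M - m) / 2) := by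
          apply mul_le_mul_of_nonneg_left _ (abs_nonneg _)
          rw [abs_le]
          constructor <;> [nlinarith [hm s, hM s]; nlinarith [hm s, hM s]]
  have hsum : ∑ s, (pstar s - phat s) * (u s - c)
      ≤ ∑ s, |pstar s - phat s| * ((M - m) / 2) := Finset.sum_le_sum fun s _ => habs s
  have hMm : 0 ≤ M - m := by
    have s := Classical.arbitrary D
    linarith [hM s, hm s]
  have : ∑ s, |pstar s - phat s| * ((M - m) / 2)
      = (∑ s, |pstar s - phat s|) * ((M - m) / 2) := by
    rw [Finset.sum_mul]
  nlinarith [hsum, key, hp3]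
end
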